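/- Let n ≥ 2, let β ∈ SB_n be a simple braid with x_{n−1} | β, and let α ∈ SB_{n+1} be a simple braid with x_n | α. Then β and α do not commute: βα ≠ αβ. -/

import Mathlib

/-- The defining relations of the positive braid monoid `MB_∞` on generators
`x i`, `i : ℕ+`: the braid relations and the far-commutation relations. -/
def BraidRel : FreeMonoid ℕ+ → FreeMonoid ℕ+ → Prop := fun a b =>
  (∃ i : ℕ+, a = FreeMonoid.of (i + 1) * FreeMonoid.of i * FreeMonoid.of (i + 1) ∧
      b = FreeMonoid.of i * FreeMonoid.of (i + 1) * FreeMonoid.of i) ∨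
  (∃ i j : ℕ+, i + 2 ≤ j ∧ a = FreeMonoid.of i * FreeMonoid.of j ∧
      b = FreeMonoid.of j * FreeMonoid.of i)

/-- The congruence generated by the braid relations. -/
def braidCon : Con (FreeMonoid ℕ+) := conGen BraidRel

/-- The positive braid monoid `MB_∞`. -/
abbrev MB : Type := braidCon.Quotient

/-- The generator `x_i` of `MB_∞`, for `i : ℕ+`. -/
def braidGen (i : ℕ+) : MB := braidCon.mk' (FreeMonoid.of i)

/-- The generator `x_i` of `MB_∞`, indexed by a natural number `i ≥ 1`
(junk value `x_1` for `i = 0`). -/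
def X (i : ℕ) : MB := braidGen ⟨max i 1, lt_of_lt_of_le one_pos (le_max_right i 1)⟩

/-- `x_i` divides `β`: `β = δ * x_i * ε` for some `δ ε ∈ MB_∞`. -/
def GenDvd (i : ℕ) (β : MB) : Prop := ∃ δ ε : MB, β = δ * X i * ε

/-- `x_i` left-divides `β`: `β = x_i * ε` for some `ε ∈ MB_∞`. -/
def GenDvdL (i : ℕ) (β : MB) : Prop := ∃ ε : MB, β = X i * ε

/-- `x_i` right-divides `β`: `β = δ * x_i` for some `δ ∈ MB_∞`. -/
def GenDvdR (i : ℕ) (β : MB) : Prop := ∃ δ : MB, β = δ * X i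

/-- The set `SB_n` of simple braids in `MB_n`: products of words in the
generators `x_1, …, x_{n-1}` in which each generator appears at most once. -/
def SB (n : ℕ) : Set MB :=
  {β | ∃ w : List ℕ, w.Nodup ∧ (∀ i ∈ w, 1 ≤ i ∧ i < n) ∧ β = (w.map X).prod}

/-- The simple centralizer `C_n(β)` of `β` in `SB_n`. -/
def C (n : ℕ) (β : MB) : Set MB := {γ ∈ SB n | β * γ = γ * β}

/-- `c_n(β)`, the cardinality of the simple centralizer `C_n(β)`. -/
noncomputable def c (n : ℕ) (β : MB) : ℕ := (C n β).ncard

/-!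
Let `x_i` act on `ℕ` as the transposition of `i` and `i + 1`. In a simple braid divisible by its
top generator, that generator occurs exactly once (the braid relations preserve the set of letters
of a word), with only smaller letters around it. Hence `β` moves `n` but fixes `n + 1`, while `α`
sends `n ↦ n + 1` or `n + 1 ↦ n`, depending on which side of `x_n` the letter `x_{n-1}` is missing
from. Either way `α` would not preserve the fixed points of `β`, as a commuting permutation must.
-/

theorem Equiv.Perm.apply_apply_eq_apply_iff_of_commute {α : Type*} {σ τ : Equiv.Perm α}
    (h : Commute σ τ) (x : α) : σ (τ x) = τ x ↔ σ x = x := by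
  rw [← Equiv.Perm.mul_apply, h.eq, Equiv.Perm.mul_apply, τ.injective.eq_iff]

namespace MB

section Lift

variable {M : Type*} [Monoid M] (g : ℕ → M)
  (hbraid : ∀ i, 1 ≤ i → g (i + 1) * g i * g (i + 1) = g i * g (i + 1) * g i)
  (hcomm : ∀ i j, 1 ≤ i → i + 2 ≤ j → g i * g j = g j * g i)

def lift : MB →* M :=
  braidCon.lift (FreeMonoid.lift fun i : ℕ+ => g i) <| Con.conGen_le.mpr <| by
    rintro a b (⟨i, rfl, rfl⟩ | ⟨i, j, hij, rfl, rfl⟩) <;>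
      simp only [Con.ker_rel, map_mul, FreeMonoid.lift_eval_of, PNat.add_coe, PNat.val_ofNat]
    · exact hbraid i i.pos
    · exact hcomm i j i.pos (by exact_mod_cast hij)

theorem lift_X {i : ℕ} (hi : 1 ≤ i) : lift g hbraid hcomm (X i) = g i := by
  simp only [lift, X, braidGen, max_eq_left hi]
  exact (Con.lift_mk' _ _).trans (FreeMonoid.lift_eval_of _ _)

end Lift

/-- Vanishes exactly on braids whose words contain `x_m`. -/
def letterIndicator (m : ℕ) : MB →* ℕ :=
  lift (fun i => if i = m then 0 else 1) (fun _ _ => by split_ifs <;> simp)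
    (fun _ _ _ _ => mul_comm _ _)

theorem letterIndicator_X (m : ℕ) {i : ℕ} (hi : 1 ≤ i) :
    letterIndicator m (X i) = if i = m then 0 else 1 :=
  lift_X _ _ _ hi

theorem mem_of_genDvd_list_prod {m : ℕ} {w : List ℕ} (hm : 1 ≤ m) (hw : ∀ i ∈ w, 1 ≤ i)
    (h : GenDvd m (w.map X).prod) : m ∈ w := by
  obtain ⟨δ, ε, hδε⟩ := h
  have h0 : letterIndicator m (w.map X).prod = 0 := by
    rw [hδε, map_mul, map_mul, letterIndicator_X m hm, if_pos rfl, mul_zero, zero_mul]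
  rw [map_list_prod, List.map_map, List.prod_eq_zero_iff] at h0
  obtain ⟨i, hi, hi0⟩ := List.mem_map.mp h0
  rw [Function.comp_apply, letterIndicator_X m (hw i hi)] at hi0
  split_ifs at hi0 with him
  exact him ▸ hi

theorem exists_eq_mul_X_mul_of_genDvd {m : ℕ} {β : MB} (hm : 1 ≤ m) (hβ : β ∈ SB (m + 1))
    (hβd : GenDvd m β) :
    ∃ β₁ β₂, β = β₁ * X m * β₂ ∧ β₁ ∈ SB m ∧ β₂ ∈ SB m ∧ (β₁ ∈ SB (m - 1) ∨ β₂ ∈ SB (m - 1)) := by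
  obtain ⟨w, hnd, hw, rfl⟩ := hβ
  obtain ⟨w₁, w₂, rfl⟩ :=
    List.append_of_mem (mem_of_genDvd_list_prod hm (fun i hi => (hw i hi).1) hβd)
  obtain ⟨hnd₁, hnd₂', hdisj⟩ := List.nodup_append.mp hnd
  obtain ⟨hm₂, hnd₂⟩ := List.nodup_cons.mp hnd₂'
  have hm₁ : m ∉ w₁ := fun h => hdisj _ h _ List.mem_cons_self rfl
  have hw₁ : ∀ i ∈ w₁, 1 ≤ i ∧ i < m := fun i hi => by
    have := hw i (by simp [hi]); have := ne_of_mem_of_not_mem hi hm₁; omega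
  have hw₂ : ∀ i ∈ w₂, 1 ≤ i ∧ i < m := fun i hi => by
    have := hw i (by simp [hi]); have := ne_of_mem_of_not_mem hi hm₂; omega
  refine ⟨(w₁.map X).prod, (w₂.map X).prod, by simp [mul_assoc], ⟨w₁, hnd₁, hw₁, rfl⟩,
    ⟨w₂, hnd₂, hw₂, rfl⟩, ?_⟩
  by_cases h₁ : m - 1 ∈ w₁
  · refine .inr ⟨w₂, hnd₂, fun i hi => ?_, rfl⟩
    have := hw₂ i hi; have : i ≠ m - 1 := fun h => hdisj _ h₁ _ (by simp [hi]) h.symm; omega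
  · refine .inl ⟨w₁, hnd₁, fun i hi => ?_, rfl⟩
    have := hw₁ i hi; have := ne_of_mem_of_not_mem hi h₁; omega

def perm : MB →* Equiv.Perm ℕ :=
  lift (fun i => Equiv.swap i (i + 1))
    (fun _ _ => by ext; simp only [Equiv.Perm.mul_apply, Equiv.swap_apply_def]; split_ifs <;> omega)
    (fun _ _ _ _ => by
      ext; simp only [Equiv.Perm.mul_apply, Equiv.swap_apply_def]; split_ifs <;> omega)

theorem perm_X {i : ℕ} (hi : 1 ≤ i) : perm (X i) = Equiv.swap i (i + 1) :=
  lift_X _ _ _ hi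

theorem perm_apply_of_lt {k x : ℕ} {γ : MB} (hγ : γ ∈ SB k) (hx : k < x) : perm γ x = x := by
  obtain ⟨w, -, hw, rfl⟩ := hγ
  induction w with
  | nil => simp
  | cons i w ih =>
    have hi := hw i List.mem_cons_self
    rw [List.map_cons, List.prod_cons, map_mul, Equiv.Perm.mul_apply,
      ih fun j hj => hw j (List.mem_cons_of_mem i hj), perm_X hi.1,
      Equiv.swap_apply_of_ne_of_ne (by omega) (by omega)]

theorem perm_apply_le {k x : ℕ} {γ : MB} (hγ : γ ∈ SB k) (hx : x ≤ k) : perm γ x ≤ k := by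
  by_contra! h
  have := (perm γ).injective (perm_apply_of_lt hγ h)
  omega

theorem perm_apply_ne_of_genDvd {n : ℕ} {β : MB} (hn : 2 ≤ n) (hβ : β ∈ SB n)
    (hβd : GenDvd (n - 1) β) : perm β n ≠ n := by
  obtain ⟨m, rfl⟩ : ∃ m, n = m + 1 := ⟨n - 1, by omega⟩
  rw [Nat.add_sub_cancel] at hβd
  obtain ⟨β₁, β₂, rfl, hβ₁, hβ₂, -⟩ := exists_eq_mul_X_mul_of_genDvd (by omega) hβ hβd
  have : perm (β₁ * X m * β₂) (m + 1) ≤ m := by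
    rw [map_mul, map_mul, Equiv.Perm.mul_apply, Equiv.Perm.mul_apply,
      perm_apply_of_lt hβ₂ (by omega), perm_X (by omega), Equiv.swap_apply_right]
    exact perm_apply_le hβ₁ le_rfl
  omega

theorem perm_apply_eq_succ_or_of_genDvd {m : ℕ} {α : MB} (hm : 1 ≤ m) (hα : α ∈ SB (m + 1))
    (hαd : GenDvd m α) : perm α m = m + 1 ∨ perm α (m + 1) = m := by
  obtain ⟨α₁, α₂, rfl, hα₁, hα₂, h⟩ := exists_eq_mul_X_mul_of_genDvd hm hα hαd
  simp only [map_mul, Equiv.Perm.mul_apply, perm_X hm]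
  rcases h with h₁ | h₂
  · right
    rw [perm_apply_of_lt hα₂ (by omega), Equiv.swap_apply_right, perm_apply_of_lt h₁ (by omega)]
  · left
    rw [perm_apply_of_lt h₂ (by omega), Equiv.swap_apply_left, perm_apply_of_lt hα₁ (by omega)]

end MB

open MB in
/-- Lemma 2.4: if `β ∈ SB_n` with `x_{n-1} ∣ β` and `α ∈ SB_{n+1}` with
`x_n ∣ α`, then `β` and `α` do not commute. -/
theorem consecutive_simple_not_commute (n : ℕ) (hn : 2 ≤ n) (β : MB) (hβ : β ∈ SB n)
    (hβd : GenDvd (n - 1) β) (α : MB) (hα : α ∈ SB (n + 1)) (hαd : GenDvd n α) :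
    β * α ≠ α * β := by
  intro hcomm
  have hperm : Commute (perm β) (perm α) := by
    rw [Commute, SemiconjBy, ← map_mul, ← map_mul, hcomm]
  have hβfix : perm β (n + 1) = n + 1 := perm_apply_of_lt hβ (by omega)
  have hβmove : perm β n ≠ n := perm_apply_ne_of_genDvd hn hβ hβd
  have hfix := Equiv.Perm.apply_apply_eq_apply_iff_of_commute hperm
  rcases perm_apply_eq_succ_or_of_genDvd (by omega) hα hαd with hαn | hαn
  · exact hβmove ((hfix n).mp (by rw [hαn, hβfix]))
  · exact hβmove (hαn ▸ (hfix (n + 1)).mpr hβfix)
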